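/- For every k ∈ ℕ there exist smooth bounded functions ã_0, …, ã_k and b̃_0, …, b̃_k : (0,∞) → ℝ with ã_k ≡ 1 such that for every smooth function f on Ω one has ∂_{zz} Z₃^k f = Σ_{l=0}^{k} ã_l(z) Z₃^l ∂_{zz} f + Σ_{j=0}^{k} b̃_j(z) Z₃^j ∂_z f. (Explicitly, ã_l = Σ_{j=l}^{k} c̃^j_{l,φ} c̃^k_{j,φ} and b̃_j = (c̃^k_{j,φ})', where the c̃^k_{j,φ} are the bounded smooth coefficients satisfying ∂_z Z₃^k f = Σ_{j=0}^{k} c̃^k_{j,φ} Z₃^j ∂_z f with c̃^k_{k,φ} ≡ 1.) -/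

import Mathlib

open MeasureTheory Set Filter
open scoped ENNReal

noncomputable section

/-- The half-space `Ω = ℝ² × (0,∞)` with coordinates `(x₁, x₂, z)`. -/
def Omega : Set (ℝ × ℝ × ℝ) := {x | 0 < x.2.2}

/-- The closed half-space `ℝ² × [0,∞)`. -/
def ClosedOmega : Set (ℝ × ℝ × ℝ) := {x | 0 ≤ x.2.2}

/-- `φ(z) = z / (1 + z)`. -/
def phi (z : ℝ) : ℝ := z / (1 + z)

/-- Coordinate directions in `ℝ × ℝ × ℝ`. -/
def dir : Fin 3 → ℝ × ℝ × ℝ := ![((1:ℝ),(0:ℝ),(0:ℝ)), (0,1,0), (0,0,1)]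

/-- Partial derivative in the `i`-th coordinate direction. -/
def pd (i : Fin 3) (f : ℝ × ℝ × ℝ → ℝ) (x : ℝ × ℝ × ℝ) : ℝ :=
  fderiv ℝ f x (dir i)

/-- The conormal vector fields: `Z₁ = ∂₁`, `Z₂ = ∂₂`, `Z₃ = φ(z) ∂_z`. -/
def Z (i : Fin 3) (f : ℝ × ℝ × ℝ → ℝ) (x : ℝ × ℝ × ℝ) : ℝ :=
  if i = 2 then phi x.2.2 * pd 2 f x else pd i f x

/-- `Z^α = Z₁^{α₁} Z₂^{α₂} Z₃^{α₃}` for a multi-index `α = (α₁, α₂, α₃)`. -/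
def Zmulti (α : ℕ × ℕ × ℕ) (f : ℝ × ℝ × ℝ → ℝ) : ℝ × ℝ × ℝ → ℝ :=
  (Z 0)^[α.1] ((Z 1)^[α.2.1] ((Z 2)^[α.2.2] f))

/-- Multi-indices of total order at most `m`. -/
def idxLe (m : ℕ) : Finset (ℕ × ℕ × ℕ) :=
  (Finset.range (m+1) ×ˢ Finset.range (m+1) ×ˢ Finset.range (m+1)).filter
    (fun α => α.1 + α.2.1 + α.2.2 ≤ m)

/-- Lebesgue measure restricted to the half-space. -/
def muOmega : Measure (ℝ × ℝ × ℝ) := volume.restrict Omega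

/-- The real-valued `L^q(Ω)` norm. -/
def lpOmega (q : ℝ≥0∞) (f : ℝ × ℝ × ℝ → ℝ) : ℝ := (eLpNorm f q muOmega).toReal

/-- Membership in the conormal space `H^m_co(Ω)` (scalar functions). -/
def MemHco (m : ℕ) (f : ℝ × ℝ × ℝ → ℝ) : Prop :=
  ∀ α ∈ idxLe m, MemLp (Zmulti α f) 2 muOmega

/-- Membership in the conormal space `W^{m,∞}_co(Ω)` (scalar functions). -/
def MemWcoInf (m : ℕ) (f : ℝ × ℝ × ℝ → ℝ) : Prop :=
  ∀ α ∈ idxLe m, MemLp (Zmulti α f) ⊤ muOmega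

/-- Square of the `H^m_co` norm: `‖f‖_m² = Σ_{|α| ≤ m} ‖Z^α f‖_{L²}²`. -/
def HcoNormSq (m : ℕ) (f : ℝ × ℝ × ℝ → ℝ) : ℝ :=
  ∑ α ∈ idxLe m, (lpOmega 2 (Zmulti α f))^2

/-- The `W^{m,∞}_co` norm: `‖f‖_{m,∞} = Σ_{|α| ≤ m} ‖Z^α f‖_{L^∞}`. -/
def WcoNorm (m : ℕ) (f : ℝ × ℝ × ℝ → ℝ) : ℝ :=
  ∑ α ∈ idxLe m, lpOmega ⊤ (Zmulti α f)

/-- The `W^{k,p}_co` norm: `Σ_{|α| ≤ k} ‖Z^α f‖_{L^p}`. -/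
def WkpCoNorm (k : ℕ) (q : ℝ≥0∞) (f : ℝ × ℝ × ℝ → ℝ) : ℝ :=
  ∑ α ∈ idxLe k, lpOmega q (Zmulti α f)

/-- The `i`-th component of a vector field as a scalar function. -/
def vcomp (u : ℝ × ℝ × ℝ → Fin 3 → ℝ) (i : Fin 3) : ℝ × ℝ × ℝ → ℝ := fun x => u x i

def VMemHco (m : ℕ) (u : ℝ × ℝ × ℝ → Fin 3 → ℝ) : Prop := ∀ i, MemHco m (vcomp u i)

def VMemWcoInf (m : ℕ) (u : ℝ × ℝ × ℝ → Fin 3 → ℝ) : Prop := ∀ i, MemWcoInf m (vcomp u i)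

/-- `‖u‖_m²` for a vector field (componentwise). -/
def VHcoNormSq (m : ℕ) (u : ℝ × ℝ × ℝ → Fin 3 → ℝ) : ℝ :=
  ∑ i : Fin 3, HcoNormSq m (vcomp u i)

/-- `‖u‖_m` for a vector field. -/
def VHcoNorm (m : ℕ) (u : ℝ × ℝ × ℝ → Fin 3 → ℝ) : ℝ := Real.sqrt (VHcoNormSq m u)

/-- `‖u‖_{m,∞}` for a vector field (componentwise). -/
def VWcoNorm (m : ℕ) (u : ℝ × ℝ × ℝ → Fin 3 → ℝ) : ℝ :=
  ∑ i : Fin 3, WcoNorm m (vcomp u i)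

/-- `‖∇u‖_{L^∞(Ω)}`, componentwise. -/
def GradLinf (u : ℝ × ℝ × ℝ → Fin 3 → ℝ) : ℝ :=
  ∑ i : Fin 3, ∑ j : Fin 3, lpOmega ⊤ (pd j (vcomp u i))

/-- `‖u‖_{L^∞(Ω)}`, componentwise. -/
def VLinf (u : ℝ × ℝ × ℝ → Fin 3 → ℝ) : ℝ := ∑ i : Fin 3, lpOmega ⊤ (vcomp u i)

/-- The `W^{1,∞}(Ω)` norm of a vector field. -/
def W1infNorm (u : ℝ × ℝ × ℝ → Fin 3 → ℝ) : ℝ := VLinf u + GradLinf u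

/-- `∇u ∈ L^∞(Ω)`. -/
def MemGradLinf (u : ℝ × ℝ × ℝ → Fin 3 → ℝ) : Prop :=
  ∀ i j : Fin 3, MemLp (pd j (vcomp u i)) ⊤ muOmega

/-- `u ∈ W^{1,∞}(Ω)`. -/
def VMemW1inf (u : ℝ × ℝ × ℝ → Fin 3 → ℝ) : Prop :=
  (∀ i, MemLp (vcomp u i) ⊤ muOmega) ∧ MemGradLinf u

/-- The `L²(Ω)` norm of a vector field. -/
def VL2Norm (u : ℝ × ℝ × ℝ → Fin 3 → ℝ) : ℝ :=
  Real.sqrt (∑ i : Fin 3, (lpOmega 2 (vcomp u i))^2)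

/-- Divergence-free in `Ω`. -/
def DivFree (u : ℝ × ℝ × ℝ → Fin 3 → ℝ) : Prop :=
  ∀ x ∈ Omega, ∑ i : Fin 3, pd i (vcomp u i) x = 0

/-- The slip boundary condition `u₃ = 0` on `{z = 0}`. -/
def SlipBC (u : ℝ × ℝ × ℝ → Fin 3 → ℝ) : Prop :=
  ∀ x₁ x₂ : ℝ, u (x₁, x₂, (0:ℝ)) 2 = 0

/-- `‖∇p‖_m²` (componentwise). -/
def GradHcoNormSq (m : ℕ) (p : ℝ × ℝ × ℝ → ℝ) : ℝ :=
  ∑ i : Fin 3, HcoNormSq m (pd i p)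

/-- `‖∇p‖_m`. -/
def GradHcoNorm (m : ℕ) (p : ℝ × ℝ × ℝ → ℝ) : ℝ := Real.sqrt (GradHcoNormSq m p)

/-- `‖D²p‖_m`, where `D²p` is the full Hessian matrix (componentwise). -/
def D2HcoNorm (m : ℕ) (p : ℝ × ℝ × ℝ → ℝ) : ℝ :=
  Real.sqrt (∑ i : Fin 3, ∑ j : Fin 3, HcoNormSq m (pd i (pd j p)))

/-- `‖∇g‖_{L²(Ω)}`. -/
def GradL2 (g : ℝ × ℝ × ℝ → ℝ) : ℝ :=
  Real.sqrt (∑ i : Fin 3, (lpOmega 2 (pd i g))^2)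

/-- `‖D²g‖_{L²(Ω)}`. -/
def D2L2 (g : ℝ × ℝ × ℝ → ℝ) : ℝ :=
  Real.sqrt (∑ i : Fin 3, ∑ j : Fin 3, (lpOmega 2 (pd i (pd j g)))^2)

/-- The curl (vorticity) of a vector field. -/
def curlOf (u : ℝ × ℝ × ℝ → Fin 3 → ℝ) (x : ℝ × ℝ × ℝ) : Fin 3 → ℝ :=
  ![pd 1 (vcomp u 2) x - pd 2 (vcomp u 1) x,
    pd 2 (vcomp u 0) x - pd 0 (vcomp u 2) x,
    pd 0 (vcomp u 1) x - pd 1 (vcomp u 0) x]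

/-- `(u, p)` solves the incompressible Euler equations on `Ω × (0,T)`
with the slip boundary condition. -/
def IsEulerSolution (T : ℝ) (u : ℝ → ℝ × ℝ × ℝ → Fin 3 → ℝ)
    (p : ℝ → ℝ × ℝ × ℝ → ℝ) : Prop :=
  (∀ t ∈ Ioo (0:ℝ) T, ∀ x ∈ Omega, ∀ i : Fin 3,
      deriv (fun s => u s x i) t
        + (∑ j : Fin 3, u t x j * pd j (vcomp (u t) i) x)
        + pd i (p t) x = 0) ∧
  (∀ t ∈ Ioo (0:ℝ) T, DivFree (u t)) ∧
  (∀ t ∈ Ioo (0:ℝ) T, SlipBC (u t))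

/-- The `H⁵(Ω)` norm (via iterated derivatives). -/
def H5Norm (f : ℝ × ℝ × ℝ → ℝ) : ℝ :=
  ∑ k ∈ Finset.range 6, (eLpNorm (fun x => ‖iteratedFDeriv ℝ k f x‖) 2 muOmega).toReal

/-- Membership in `H⁵(Ω)`. -/
def MemH5 (f : ℝ × ℝ × ℝ → ℝ) : Prop :=
  ∀ k ∈ Finset.range 6, MemLp (fun x => ‖iteratedFDeriv ℝ k f x‖) 2 muOmega

/-- `u ∈ C([0,T]; H⁵(Ω))`. -/
def ContInH5 (T : ℝ) (u : ℝ → ℝ × ℝ × ℝ → Fin 3 → ℝ) : Prop :=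
  (∀ t ∈ Icc (0:ℝ) T, ∀ i : Fin 3, MemH5 (vcomp (u t) i)) ∧
  ∀ t ∈ Icc (0:ℝ) T,
    Tendsto (fun s => ∑ i : Fin 3, H5Norm (fun x => u s x i - u t x i))
      (nhdsWithin t (Icc 0 T)) (nhds 0)

-- basics
lemma isOpen_Omega : IsOpen Omega := isOpen_lt continuous_const (continuous_snd.snd)

/-- the projection onto the third coordinate as a CLM -/
def P3 : (ℝ × ℝ × ℝ) →L[ℝ] ℝ := (ContinuousLinearMap.snd ℝ ℝ ℝ).comp (ContinuousLinearMap.snd ℝ ℝ (ℝ × ℝ))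

lemma P3_apply (x : ℝ × ℝ × ℝ) : P3 x = x.2.2 := rfl

lemma contDiff_eval (p : Polynomial ℝ) : ContDiff ℝ (⊤ : ℕ∞) fun x : ℝ => p.eval x := by
  induction p using Polynomial.induction_on' with
  | add p q hp hq => simpa [Polynomial.eval_add] using hp.add hq
  | monomial n a => simpa [Polynomial.eval_monomial] using contDiff_const.mul (contDiff_id.pow n)

/-- `w(z) = (1+z)⁻¹`. -/
def wz (z : ℝ) : ℝ := (1 + z)⁻¹

/-- Derivative operator at polynomial level: `d/dz p(w(z)) = (Dpoly p)(w(z))`. -/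
def Dpoly (p : Polynomial ℝ) : Polynomial ℝ := -Polynomial.X ^ 2 * p.derivative

/-- The coefficient polynomials. -/
def Cp : ℕ → ℕ → Polynomial ℝ
  | 0, 0 => 1
  | 0, _+1 => 0
  | k+1, 0 => (1 - Polynomial.X) * Dpoly (Cp k 0) + Polynomial.X ^ 2 * Cp k 0
  | k+1, j+1 => (1 - Polynomial.X) * Dpoly (Cp k (j+1)) + Polynomial.X ^ 2 * Cp k (j+1) + Cp k j

lemma Cp_eq_zero : ∀ k j : ℕ, k < j → Cp k j = 0 := by
  intro k
  induction k with
  | zero => intro j hj; match j, hj with | j+1, _ => rfl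
  | succ k ih =>
    intro j hj
    match j, hj with
    | j+1, hj =>
      have h1 : Cp k (j+1) = 0 := ih _ (by omega)
      have h2 : Cp k j = 0 := ih _ (by omega)
      show (1 - Polynomial.X) * Dpoly (Cp k (j+1)) + Polynomial.X ^ 2 * Cp k (j+1) + Cp k j = 0
      simp [h1, h2, Dpoly]

lemma Cp_diag : ∀ k : ℕ, Cp k k = 1 := by
  intro k
  induction k with
  | zero => rfl
  | succ k ih =>
    have h1 : Cp k (k+1) = 0 := Cp_eq_zero _ _ (by omega)
    show (1 - Polynomial.X) * Dpoly (Cp k (k+1)) + Polynomial.X ^ 2 * Cp k (k+1) + Cp k k = 1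
    simp [h1, ih, Dpoly]

lemma wz_hasDerivAt {z : ℝ} (hz : 0 < z) : HasDerivAt wz (-(wz z) ^ 2) z := by
  have h : (1 : ℝ) + z ≠ 0 := by positivity
  have := ((hasDerivAt_id z).const_add 1).inv h
  have h2 : -((1:ℝ) + z)⁻¹ ^ 2 = -1 / (1 + z) ^ 2 := by
    field_simp
  rw [show HasDerivAt wz (-wz z ^ 2) z ↔
      HasDerivAt (fun y => (1 + y)⁻¹) (-1 / (1 + z) ^ 2) z by rw [← h2]; rfl]
  exact this

lemma ev_hasDerivAt (p : Polynomial ℝ) {z : ℝ} (hz : 0 < z) :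
    HasDerivAt (fun z => p.eval (wz z)) ((Dpoly p).eval (wz z)) z := by
  have := (p.hasDerivAt (wz z)).comp z (wz_hasDerivAt hz)
  simpa [Dpoly, mul_comm, Function.comp_def] using this

lemma ev_deriv (p : Polynomial ℝ) {z : ℝ} (hz : 0 < z) :
    deriv (fun z => p.eval (wz z)) z = (Dpoly p).eval (wz z) :=
  (ev_hasDerivAt p hz).deriv

lemma phi_eq {z : ℝ} (hz : 0 < z) : phi z = 1 - wz z := by
  have h : (1 : ℝ) + z ≠ 0 := by positivity
  rw [phi, wz]
  field_simp
  ring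

lemma phi_hasDerivAt {z : ℝ} (hz : 0 < z) : HasDerivAt phi ((wz z) ^ 2) z := by
  have h : (1 : ℝ) + z ≠ 0 := by positivity
  have h1 : HasDerivAt (fun z : ℝ => 1 - wz z) ((wz z)^2) z := by
    simpa using (wz_hasDerivAt hz).const_sub 1
  have : phi =ᶠ[nhds z] fun z => 1 - wz z := by
    filter_upwards [eventually_gt_nhds hz] with y hy using phi_eq hy
  exact h1.congr_of_eventuallyEq this

lemma phi_deriv {z : ℝ} (hz : 0 < z) : deriv phi z = (wz z) ^ 2 := (phi_hasDerivAt hz).deriv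

/-- Boundedness of polynomial evals of `wz` on `(0,∞)`. -/
lemma ev_bounded (p : Polynomial ℝ) : ∃ B : ℝ, ∀ z ∈ Ioi (0:ℝ), |p.eval (wz z)| ≤ B := by
  obtain ⟨t₀, _, ht₀⟩ := IsCompact.exists_isMaxOn (s := Icc (0:ℝ) 1) isCompact_Icc
    (nonempty_Icc.2 zero_le_one) (f := fun t => |p.eval t|)
    (continuous_abs.comp (contDiff_eval p).continuous).continuousOn
  refine ⟨|p.eval t₀|, fun z hz => ht₀ ?_⟩
  have h : (0:ℝ) < 1 + z := by have := hz.out; linarith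
  constructor
  · exact le_of_lt (inv_pos.2 h)
  · rw [wz, inv_le_one_iff₀]
    right; linarith [hz.out]

/-- Smoothness of polynomial evals of `wz` on `(0,∞)`. -/
lemma ev_contDiffOn (p : Polynomial ℝ) : ContDiffOn ℝ (⊤ : ℕ∞) (fun z => p.eval (wz z)) (Ioi 0) := by
  apply (contDiff_eval p).comp_contDiffOn
  apply ContDiffOn.inv
  · exact (contDiff_const.add contDiff_id).contDiffOn
  · intro z hz; have := hz.out; positivity

lemma dir2 : dir 2 = (0, 0, 1) := rfl

lemma P3_dir2 : P3 (dir 2) = 1 := rfl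

/-- Product rule for `pd 2` with a coefficient depending only on `z`. -/
lemma pd2_mul (c : ℝ → ℝ) (h : ℝ × ℝ × ℝ → ℝ) (x : ℝ × ℝ × ℝ)
    (hc : HasDerivAt c (deriv c x.2.2) x.2.2) (hh : DifferentiableAt ℝ h x) :
    pd 2 (fun y => c y.2.2 * h y) x = deriv c x.2.2 * h x + c x.2.2 * pd 2 h x := by
  have hC : HasFDerivAt (fun y : ℝ × ℝ × ℝ => c y.2.2) (deriv c x.2.2 • P3) x := by
    have := hc.comp_hasFDerivAt x P3.hasFDerivAt
    exact this
  have hH : HasFDerivAt h (fderiv ℝ h x) x := hh.hasFDerivAt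
  have hmul := hC.fun_mul hH
  rw [pd, hmul.fderiv]
  simp [P3_dir2, pd]
  ring

/-- Differentiability of `y ↦ c (y.2.2) * h y`. -/
lemma diff_zmul (c : ℝ → ℝ) (h : ℝ × ℝ × ℝ → ℝ) (x : ℝ × ℝ × ℝ)
    (hc : DifferentiableAt ℝ c x.2.2) (hh : DifferentiableAt ℝ h x) :
    DifferentiableAt ℝ (fun y => c y.2.2 * h y) x := by
  exact (hc.comp x (differentiable_snd.differentiableAt.snd)).mul hh

/-- `pd 2` of a finite sum. -/
lemma pd2_sum {ι : Type*} (s : Finset ι) (F : ι → ℝ × ℝ × ℝ → ℝ) (x : ℝ × ℝ × ℝ)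
    (hF : ∀ i ∈ s, DifferentiableAt ℝ (F i) x) :
    pd 2 (fun y => ∑ i ∈ s, F i y) x = ∑ i ∈ s, pd 2 (F i) x := by
  rw [pd, fderiv_fun_sum hF]
  simp [pd]

/-- `pd i g` is smooth on `Omega` if `g` is. -/
lemma contDiffOn_pd (i : Fin 3) (g : ℝ × ℝ × ℝ → ℝ) (hg : ContDiffOn ℝ (⊤ : ℕ∞) g Omega) :
    ContDiffOn ℝ (⊤ : ℕ∞) (pd i g) Omega := by
  have h1 : ContDiffOn ℝ (⊤ : ℕ∞) (fderiv ℝ g) Omega :=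
    hg.fderiv_of_isOpen isOpen_Omega (by simp)
  exact (ContinuousLinearMap.apply ℝ ℝ (dir i)).contDiff.comp_contDiffOn h1

lemma contDiffOn_phi3 : ContDiffOn ℝ (⊤ : ℕ∞) (fun y : ℝ × ℝ × ℝ => phi y.2.2) Omega := by
  apply ContDiffOn.div
  · exact contDiff_snd.snd.contDiffOn
  · exact (contDiff_const.add contDiff_snd.snd).contDiffOn
  · intro y hy; have : (0:ℝ) < y.2.2 := hy; positivity

lemma contDiffOn_Z2 (g : ℝ × ℝ × ℝ → ℝ) (hg : ContDiffOn ℝ (⊤ : ℕ∞) g Omega) :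
    ContDiffOn ℝ (⊤ : ℕ∞) (Z 2 g) Omega := by
  have : Z 2 g = fun y => phi y.2.2 * pd 2 g y := by
    funext y; simp [Z]
  rw [this]
  exact contDiffOn_phi3.mul (contDiffOn_pd 2 g hg)

lemma contDiffOn_Z2_iter (k : ℕ) (g : ℝ × ℝ × ℝ → ℝ) (hg : ContDiffOn ℝ (⊤ : ℕ∞) g Omega) :
    ContDiffOn ℝ (⊤ : ℕ∞) ((Z 2)^[k] g) Omega := by
  induction k with
  | zero => exact hg
  | succ k ih => rw [Function.iterate_succ_apply']; exact contDiffOn_Z2 _ ih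

lemma diffAt_of_contDiffOn {g : ℝ × ℝ × ℝ → ℝ} (hg : ContDiffOn ℝ (⊤ : ℕ∞) g Omega)
    {x : ℝ × ℝ × ℝ} (hx : x ∈ Omega) : DifferentiableAt ℝ g x :=
  (hg.contDiffAt (isOpen_Omega.mem_nhds hx)).differentiableAt (by simp)

/-- `∂_z Z₃^k f = Σ_{j≤k} c̃^k_j Z₃^j ∂_z f` where `c̃^k_j = (Cp k j).eval ∘ wz`. -/
lemma key1 (k : ℕ) (f : ℝ × ℝ × ℝ → ℝ) (hf : ContDiffOn ℝ (⊤ : ℕ∞) f Omega) :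
    ∀ x ∈ Omega, pd 2 ((Z 2)^[k] f) x
      = ∑ j ∈ Finset.range (k+1), (Cp k j).eval (wz x.2.2) * (Z 2)^[j] (pd 2 f) x := by
  induction k with
  | zero =>
    intro x hx
    simp [Cp]
  | succ k ih =>
    intro x hx
    have hz : (0:ℝ) < x.2.2 := hx
    set z := x.2.2 with hzdef
    set t := wz z with htdef
    have hpdf : ContDiffOn ℝ (⊤ : ℕ∞) (pd 2 f) Omega := contDiffOn_pd 2 f hf
    set h : ℕ → ℝ × ℝ × ℝ → ℝ := fun j => (Z 2)^[j] (pd 2 f) with hhdef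
    have hhsm : ∀ j, ContDiffOn ℝ (⊤ : ℕ∞) (h j) Omega := fun j => contDiffOn_Z2_iter j _ hpdf
    set g : ℝ × ℝ × ℝ → ℝ := (Z 2)^[k] f with hgdef
    have hgsm : ContDiffOn ℝ (⊤ : ℕ∞) g Omega := contDiffOn_Z2_iter k f hf
    -- the eventual equality from the inductive hypothesis
    have hev : pd 2 g =ᶠ[nhds x]
        (fun y => ∑ j ∈ Finset.range (k+1), (Cp k j).eval (wz y.2.2) * h j y) := by
      filter_upwards [isOpen_Omega.mem_nhds hx] with y hy using ih y hy
    -- step 1: product rule for Z2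
    have step1 : pd 2 ((Z 2)^[k+1] f) x = deriv phi z * pd 2 g x + phi z * pd 2 (pd 2 g) x := by
      rw [Function.iterate_succ_apply']
      have hZg : Z 2 g = fun y => phi y.2.2 * pd 2 g y := by funext y; simp [Z]
      rw [hZg]
      exact pd2_mul phi (pd 2 g) x ((phi_hasDerivAt hz).congr_deriv (phi_deriv hz).symm)
        (diffAt_of_contDiffOn (contDiffOn_pd 2 g hgsm) hx)
    -- step 2: compute pd 2 (pd 2 g) via the sum
    have hdiffterm : ∀ j ∈ Finset.range (k+1),
        DifferentiableAt ℝ (fun y => (Cp k j).eval (wz y.2.2) * h j y) x :=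
      fun j _ => diff_zmul _ _ x (ev_hasDerivAt (Cp k j) hz).differentiableAt
        (diffAt_of_contDiffOn (hhsm j) hx)
    have step2 : pd 2 (pd 2 g) x
        = ∑ j ∈ Finset.range (k+1),
            ((Dpoly (Cp k j)).eval t * h j x + (Cp k j).eval t * pd 2 (h j) x) := by
      have e1 : pd 2 (pd 2 g) x = pd 2
          (fun y => ∑ j ∈ Finset.range (k+1), (Cp k j).eval (wz y.2.2) * h j y) x := by
        show (fderiv ℝ (pd 2 g) x) (dir 2) = _
        rw [hev.fderiv_eq]; rfl
      rw [e1, pd2_sum _ _ x hdiffterm]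
      apply Finset.sum_congr rfl
      intro j _
      have := pd2_mul (fun s => (Cp k j).eval (wz s)) (h j) x
        ((ev_hasDerivAt (Cp k j) hz).congr_deriv (ev_deriv (Cp k j) hz).symm)
        (diffAt_of_contDiffOn (hhsm j) hx)
      rw [this, ev_deriv (Cp k j) hz]
    -- notation for the new coefficients
    set A : ℕ → ℝ := fun j => ((1 - Polynomial.X) * Dpoly (Cp k j)
        + Polynomial.X ^ 2 * Cp k j).eval t with hAdef
    have hAeq : ∀ j, A j = deriv phi z * (Cp k j).eval t + phi z * (Dpoly (Cp k j)).eval t := by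
      intro j
      rw [phi_deriv hz, phi_eq hz, hAdef]
      simp [htdef]
      ring
    have hZstep : ∀ j, phi z * pd 2 (h j) x = h (j+1) x := by
      intro j
      rw [hhdef]
      simp only [Function.iterate_succ_apply']
      simp [Z, hzdef]
    -- combine
    rw [step1, ih x hx, step2]
    rw [Finset.mul_sum, Finset.mul_sum, ← Finset.sum_add_distrib]
    have emain : ∀ j ∈ Finset.range (k+1),
        deriv phi z * ((Cp k j).eval (wz x.2.2) * (Z 2)^[j] (pd 2 f) x)
          + phi z * ((Dpoly (Cp k j)).eval t * h j x + (Cp k j).eval t * pd 2 (h j) x)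
        = A j * h j x + (Cp k j).eval t * h (j+1) x := by
      intro j _
      rw [hAeq j, ← hZstep j]
      show deriv phi z * ((Cp k j).eval t * h j x) + _ = _
      ring
    rw [Finset.sum_congr rfl emain, Finset.sum_add_distrib]
    -- now RHS rearrangement
    have hRHS : ∑ j ∈ Finset.range (k+2), (Cp (k+1) j).eval (wz x.2.2) * (Z 2)^[j] (pd 2 f) x
        = (∑ j ∈ Finset.range (k+1), A j * h j x)
          + ∑ j ∈ Finset.range (k+1), (Cp k j).eval t * h (j+1) x := by
      have hsplit : ∀ j ∈ Finset.range (k+1),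
          (Cp (k+1) (j+1)).eval t * h (j+1) x
            = A (j+1) * h (j+1) x + (Cp k j).eval t * h (j+1) x := by
        intro j _
        have : Cp (k+1) (j+1) = (1 - Polynomial.X) * Dpoly (Cp k (j+1))
            + Polynomial.X ^ 2 * Cp k (j+1) + Cp k j := rfl
        rw [this]
        simp only [hAdef, Polynomial.eval_add]
        ring
      rw [Finset.sum_range_succ' _ (k+1)]
      show (∑ j ∈ Finset.range (k+1), (Cp (k+1) (j+1)).eval t * h (j+1) x)
          + (Cp (k+1) 0).eval t * h 0 x = _
      rw [Finset.sum_congr rfl hsplit, Finset.sum_add_distrib]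
      have hA0 : (Cp (k+1) 0).eval t * h 0 x = A 0 * h 0 x := by
        have : Cp (k+1) 0 = (1 - Polynomial.X) * Dpoly (Cp k 0)
            + Polynomial.X ^ 2 * Cp k 0 := rfl
        rw [this, hAdef]
      have hAtop : A (k+1) = 0 := by
        simp only [hAdef]
        rw [Cp_eq_zero k (k+1) (by omega)]
        simp [Dpoly]
      have e2 : (∑ j ∈ Finset.range (k+1), A (j+1) * h (j+1) x) + A 0 * h 0 x
          = ∑ j ∈ Finset.range (k+1), A j * h j x := by
        rw [← Finset.sum_range_succ' (fun j => A j * h j x) (k+1),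
          Finset.sum_range_succ, hAtop]
        simp
      rw [hA0]
      linarith [e2]
    rw [hRHS]

lemma Cp_sum_diag (k : ℕ) : (∑ j ∈ Finset.range (k+1), Cp k j * Cp j k) = 1 := by
  rw [Finset.sum_eq_single k]
  · rw [Cp_diag]; simp
  · intro j hj hne
    have : j < k := by
      have := Finset.mem_range.1 hj; omega
    rw [Cp_eq_zero j k this]; ring
  · intro hk; exact absurd (Finset.self_mem_range_succ k) hk


theorem conormal_commutator_iv' (k : ℕ) :
    ∃ a b : ℕ → ℝ → ℝ,
      (∀ l ≤ k,
        (ContDiffOn ℝ (⊤ : ℕ∞) (a l) (Ioi 0) ∧ ∃ B : ℝ, ∀ z ∈ Ioi (0:ℝ), |a l z| ≤ B) ∧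
        (ContDiffOn ℝ (⊤ : ℕ∞) (b l) (Ioi 0) ∧ ∃ B : ℝ, ∀ z ∈ Ioi (0:ℝ), |b l z| ≤ B)) ∧
      (∀ z ∈ Ioi (0:ℝ), a k z = 1) ∧
      (∀ f : ℝ × ℝ × ℝ → ℝ, ContDiffOn ℝ (⊤ : ℕ∞) f Omega → ∀ x ∈ Omega,
        pd 2 (pd 2 ((Z 2)^[k] f)) x
          = (∑ l ∈ Finset.range (k+1), a l x.2.2 * (Z 2)^[l] (pd 2 (pd 2 f)) x)
            + ∑ j ∈ Finset.range (k+1), b j x.2.2 * (Z 2)^[j] (pd 2 f) x) := by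
  refine ⟨fun l z => (∑ j ∈ Finset.range (k+1), Cp k j * Cp j l).eval (wz z),
    fun j z => (Dpoly (Cp k j)).eval (wz z), ?_, ?_, ?_⟩
  · intro l _
    exact ⟨⟨ev_contDiffOn _, ev_bounded _⟩, ⟨ev_contDiffOn _, ev_bounded _⟩⟩
  · intro z _
    show (∑ j ∈ Finset.range (k+1), Cp k j * Cp j k).eval (wz z) = 1
    rw [Cp_sum_diag k]; simp
  · intro f hf x hx
    have hz : (0:ℝ) < x.2.2 := hx
    set z := x.2.2 with hzdef
    set t := wz z with htdef
    have hpdf : ContDiffOn ℝ (⊤ : ℕ∞) (pd 2 f) Omega := contDiffOn_pd 2 f hf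
    set h : ℕ → ℝ × ℝ × ℝ → ℝ := fun j => (Z 2)^[j] (pd 2 f) with hhdef
    have hhsm : ∀ j, ContDiffOn ℝ (⊤ : ℕ∞) (h j) Omega := fun j => contDiffOn_Z2_iter j _ hpdf
    set g : ℝ × ℝ × ℝ → ℝ := (Z 2)^[k] f with hgdef
    have hev : pd 2 g =ᶠ[nhds x]
        (fun y => ∑ j ∈ Finset.range (k+1), (Cp k j).eval (wz y.2.2) * h j y) := by
      filter_upwards [isOpen_Omega.mem_nhds hx] with y hy using key1 k f hf y hy
    have hdiffterm : ∀ j ∈ Finset.range (k+1),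
        DifferentiableAt ℝ (fun y => (Cp k j).eval (wz y.2.2) * h j y) x :=
      fun j _ => diff_zmul _ _ x (ev_hasDerivAt (Cp k j) hz).differentiableAt
        (diffAt_of_contDiffOn (hhsm j) hx)
    have step2 : pd 2 (pd 2 g) x
        = ∑ j ∈ Finset.range (k+1),
            ((Dpoly (Cp k j)).eval t * h j x + (Cp k j).eval t * pd 2 (h j) x) := by
      have e1 : pd 2 (pd 2 g) x = pd 2
          (fun y => ∑ j ∈ Finset.range (k+1), (Cp k j).eval (wz y.2.2) * h j y) x := by
        show (fderiv ℝ (pd 2 g) x) (dir 2) = _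
        rw [hev.fderiv_eq]; rfl
      rw [e1, pd2_sum _ _ x hdiffterm]
      apply Finset.sum_congr rfl
      intro j _
      have := pd2_mul (fun s => (Cp k j).eval (wz s)) (h j) x
        ((ev_hasDerivAt (Cp k j) hz).congr_deriv (ev_deriv (Cp k j) hz).symm)
        (diffAt_of_contDiffOn (hhsm j) hx)
      rw [this, ev_deriv (Cp k j) hz]
    -- expand pd 2 (h j) using key1 for pd 2 f
    set E : ℕ → ℝ := fun l => (Z 2)^[l] (pd 2 (pd 2 f)) x with hEdef
    have hexp : ∀ j ∈ Finset.range (k+1),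
        pd 2 (h j) x = ∑ l ∈ Finset.range (k+1), (Cp j l).eval t * E l := by
      intro j hj
      have hjk : j + 1 ≤ k + 1 := Finset.mem_range.1 hj
      have := key1 j (pd 2 f) hpdf x hx
      rw [hhdef]
      simp only []
      rw [this]
      apply Finset.sum_subset (Finset.range_subset_range.2 hjk)
      intro l _ hl
      have : j < l := by by_contra hc; exact hl (Finset.mem_range.2 (by omega))
      rw [Cp_eq_zero j l this]
      simp
    rw [step2, Finset.sum_add_distrib]
    have hswap : ∑ j ∈ Finset.range (k+1), (Cp k j).eval t * pd 2 (h j) x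
        = ∑ l ∈ Finset.range (k+1),
            (∑ j ∈ Finset.range (k+1), Cp k j * Cp j l).eval t * E l := by
      rw [Finset.sum_congr rfl (fun j hj => by rw [hexp j hj])]
      simp only [Finset.mul_sum]
      rw [Finset.sum_comm]
      apply Finset.sum_congr rfl
      intro l _
      rw [Polynomial.eval_finset_sum, Finset.sum_mul]
      apply Finset.sum_congr rfl
      intro j _
      rw [Polynomial.eval_mul]
      ring
    rw [hswap, add_comm]

/-- Lemma 2.2 (iv): `∂_{zz} Z₃^k f = Σ_{l≤k} ã_l Z₃^l ∂_{zz} f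
+ Σ_{j≤k} b̃_j Z₃^j ∂_z f`, with smooth bounded coefficients on `(0,∞)` and `ã_k ≡ 1`. -/
theorem conormal_commutator_iv (k : ℕ) :
    ∃ a b : ℕ → ℝ → ℝ,
      (∀ l ≤ k,
        (ContDiffOn ℝ (⊤ : ℕ∞) (a l) (Ioi 0) ∧ ∃ B : ℝ, ∀ z ∈ Ioi (0:ℝ), |a l z| ≤ B) ∧
        (ContDiffOn ℝ (⊤ : ℕ∞) (b l) (Ioi 0) ∧ ∃ B : ℝ, ∀ z ∈ Ioi (0:ℝ), |b l z| ≤ B)) ∧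
      (∀ z ∈ Ioi (0:ℝ), a k z = 1) ∧
      (∀ f : ℝ × ℝ × ℝ → ℝ, ContDiffOn ℝ (⊤ : ℕ∞) f Omega → ∀ x ∈ Omega,
        pd 2 (pd 2 ((Z 2)^[k] f)) x
          = (∑ l ∈ Finset.range (k+1), a l x.2.2 * (Z 2)^[l] (pd 2 (pd 2 f)) x)
            + ∑ j ∈ Finset.range (k+1), b j x.2.2 * (Z 2)^[j] (pd 2 f) x) :=
  conormal_commutator_iv' k
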